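/- arXiv:2506.16971 — 2 statements merged into one kernel-verified Lean document; each statement's English description precedes it below -/
import Mathlib

section
/- For one-dimensional Gaussian measures N(μ₁, σ²) and N(μ₂, σ²) with common variance σ² = 1, the total variation distance satisfies ‖N(μ₁,1) − N(μ₂,1)‖_TV = 1 − 2Φ(−|μ₁ − μ₂|/2), where Φ is the standard normal CDF; hence there exists a sub-probability coupling of the two measures over the shifted-diagonal relation {(x̂, x) : x = x̂ + (μ₂ − μ₁)} with parameter δ = 1 − 2Φ(−|μ₁ − μ₂|/2). -/
open MeasureTheory Set ProbabilityTheory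

def IsSubCoupling {Xh X : Type*} [MeasurableSpace Xh] [MeasurableSpace X]
    (v : Measure (Xh × X)) (phat : Measure Xh) (p : Measure X)
    (R : Set (Xh × X)) (δ : ℝ) : Prop :=
  v univ = v R ∧
  ENNReal.ofReal (1 - δ) ≤ v univ ∧
  (∀ A : Set X, MeasurableSet A → v (univ ×ˢ A) ≤ p A) ∧
  (∀ B : Set Xh, MeasurableSet B → v (B ×ˢ univ) ≤ phat B)

/-- Total variation distance `sup_A |p(A) - q(A)|` over measurable sets. -/
noncomputable def tvDist {X : Type*} [MeasurableSpace X] (p q : Measure X) : ℝ :=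
  ⨆ A : {A : Set X // MeasurableSet A}, |(p A.1).toReal - (q A.1).toReal|

/-- Standard Gaussian cumulative distribution function. -/
noncomputable def Phi (x : ℝ) : ℝ :=
  ∫ ξ in Iic x, (Real.sqrt (2 * Real.pi))⁻¹ * Real.exp (-ξ ^ 2 / 2)

lemma Phi_eq (x : ℝ) : Phi x = ∫ ξ in Iic x, gaussianPDFReal 0 1 ξ := by
  unfold Phi
  refine setIntegral_congr_fun measurableSet_Iic fun ξ _ => ?_
  simp [gaussianPDFReal]

lemma Phi_add_Phi_neg (x : ℝ) : Phi x + Phi (-x) = 1 := by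
  rw [Phi_eq, Phi_eq]
  have h1 : ∫ ξ in Iic (-x), gaussianPDFReal 0 1 ξ = ∫ ξ in Ici x, gaussianPDFReal 0 1 ξ := by
    have h := (Measure.measurePreserving_neg (volume : Measure ℝ)).setIntegral_preimage_emb
      (MeasurableEquiv.neg ℝ).measurableEmbedding (gaussianPDFReal 0 1) (Iic (-x))
    have hpre : (Neg.neg : ℝ → ℝ) ⁻¹' Iic (-x) = Ici x := by
      ext y; simp
    rw [hpre] at h
    rw [← h]
    refine setIntegral_congr_fun measurableSet_Ici fun ξ _ => ?_
    simp [gaussianPDFReal]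
  rw [h1, ← setIntegral_congr_set Iio_ae_eq_Iic,
    intervalIntegral.integral_Iio_add_Ici ((integrable_gaussianPDFReal 0 1).integrableOn)
      ((integrable_gaussianPDFReal 0 1).integrableOn)]
  exact integral_gaussianPDFReal_eq_one 0 one_ne_zero

lemma Phi_mono {a b : ℝ} (h : a ≤ b) : Phi a ≤ Phi b := by
  rw [Phi_eq, Phi_eq]
  exact setIntegral_mono_set (integrable_gaussianPDFReal 0 1).integrableOn
    (ae_of_all _ fun x => gaussianPDFReal_nonneg _ _ _)
    (HasSubset.Subset.eventuallyLE (Iic_subset_Iic.2 h))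

lemma Phi_nonneg (x : ℝ) : 0 ≤ Phi x := by
  rw [Phi_eq]
  exact setIntegral_nonneg measurableSet_Iic fun ξ _ => gaussianPDFReal_nonneg _ _ _

lemma gaussian_Iic_toReal (μ c : ℝ) :
    ((gaussianReal μ 1) (Iic c)).toReal = Phi (c - μ) := by
  rw [gaussianReal_apply_eq_integral μ one_ne_zero, ENNReal.toReal_ofReal
    (setIntegral_nonneg measurableSet_Iic fun x _ => gaussianPDFReal_nonneg _ _ _), Phi_eq]
  have h := (measurePreserving_add_right (volume : Measure ℝ) μ).setIntegral_preimage_emb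
    (MeasurableEquiv.addRight μ).measurableEmbedding (gaussianPDFReal μ 1) (Iic c)
  rw [preimage_add_const_Iic] at h
  rw [← h]
  refine setIntegral_congr_fun measurableSet_Iic fun x _ => ?_
  rw [gaussianPDFReal_add]
  simp

lemma gaussian_toReal (μ : ℝ) (A : Set ℝ) :
    ((gaussianReal μ 1) A).toReal = ∫ x in A, gaussianPDFReal μ 1 x := by
  rw [gaussianReal_apply_eq_integral μ one_ne_zero, ENNReal.toReal_ofReal
    (setIntegral_nonneg_of_ae_restrict (ae_of_all _ fun x => gaussianPDFReal_nonneg _ _ _))]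

lemma pdf_le {a b x : ℝ} (h : (x - b) ^ 2 ≤ (x - a) ^ 2) :
    gaussianPDFReal a 1 x ≤ gaussianPDFReal b 1 x := by
  unfold gaussianPDFReal
  push_cast
  refine mul_le_mul_of_nonneg_left (Real.exp_le_exp.2 ?_) (by positivity)
  linarith

lemma side_le {f g : ℝ → ℝ} (hf : Integrable f) (hg : Integrable g)
    {S A : Set ℝ} (hS : MeasurableSet S) (hA : MeasurableSet A)
    (h1 : ∀ x ∈ S, g x ≤ f x) (h2 : ∀ x ∈ Sᶜ, f x ≤ g x) :
    (∫ x in A, f x) - ∫ x in A, g x ≤ (∫ x in S, f x) - ∫ x in S, g x := by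
  set h : ℝ → ℝ := fun x => f x - g x with hh_def
  have hh : Integrable h := hf.sub hg
  have e1 : (∫ x in A, f x) - ∫ x in A, g x = ∫ x in A, h x :=
    (integral_sub hf.integrableOn hg.integrableOn).symm
  have e2 : (∫ x in S, f x) - ∫ x in S, g x = ∫ x in S, h x :=
    (integral_sub hf.integrableOn hg.integrableOn).symm
  rw [e1, e2]
  have split : (∫ x in A ∩ S, h x) + ∫ x in A \ S, h x = ∫ x in A, h x :=
    integral_inter_add_diff hS hh.integrableOn
  have hneg : ∫ x in A \ S, h x ≤ 0 :=
    setIntegral_nonpos (hA.diff hS) fun x hx => sub_nonpos.2 (h2 x hx.2)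
  have hmono : (∫ x in A ∩ S, h x) ≤ ∫ x in S, h x :=
    setIntegral_mono_set hh.integrableOn
      ((ae_restrict_iff' hS).2 (ae_of_all _ fun x hx => sub_nonneg.2 (h1 x hx)))
      (HasSubset.Subset.eventuallyLE inter_subset_right)
  linarith

lemma abs_diff_le_key {f g : ℝ → ℝ} (hf : Integrable f) (hg : Integrable g)
    (hfg : ∫ x, f x = ∫ x, g x)
    {S A : Set ℝ} (hS : MeasurableSet S) (hA : MeasurableSet A)
    (h1 : ∀ x ∈ S, g x ≤ f x) (h2 : ∀ x ∈ Sᶜ, f x ≤ g x) :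
    |(∫ x in A, f x) - ∫ x in A, g x| ≤ (∫ x in S, f x) - ∫ x in S, g x := by
  rw [abs_le]
  constructor
  · have h := side_le hg hf hS.compl hA (fun x hx => h2 x hx)
      (fun x hx => h1 x (by simpa using hx))
    have cf : (∫ x in S, f x) + ∫ x in Sᶜ, f x = ∫ x, f x := integral_add_compl hS hf
    have cg : (∫ x in S, g x) + ∫ x in Sᶜ, g x = ∫ x, g x := integral_add_compl hS hg
    linarith
  · exact side_le hf hg hS hA h1 h2

lemma tvDist_comm {X : Type*} [MeasurableSpace X] (p q : Measure X) :
    tvDist p q = tvDist q p := by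
  unfold tvDist
  exact iSup_congr fun A => abs_sub_comm _ _

lemma tv_formula (μ₁ μ₂ : ℝ) (hle : μ₁ ≤ μ₂) :
    tvDist (gaussianReal μ₁ 1) (gaussianReal μ₂ 1) = 1 - 2 * Phi (-(μ₂ - μ₁) / 2) := by
  set c : ℝ := (μ₁ + μ₂) / 2 with hc
  have hc1 : c - μ₁ = (μ₂ - μ₁) / 2 := by rw [hc]; ring
  have hc2 : c - μ₂ = -(μ₂ - μ₁) / 2 := by rw [hc]; ring
  have hnegle : -(μ₂ - μ₁) / 2 ≤ (μ₂ - μ₁) / 2 := by linarith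
  have hrefl : Phi ((μ₂ - μ₁) / 2) = 1 - Phi (-(μ₂ - μ₁) / 2) := by
    have h := Phi_add_Phi_neg ((μ₂ - μ₁) / 2)
    rw [← neg_div] at h
    linarith
  set D : ℝ := 1 - 2 * Phi (-(μ₂ - μ₁) / 2) with hD
  have hDval : Phi ((μ₂ - μ₁) / 2) - Phi (-(μ₂ - μ₁) / 2) = D := by rw [hD, hrefl]; ring
  have hIic : |((gaussianReal μ₁ 1) (Iic c)).toReal - ((gaussianReal μ₂ 1) (Iic c)).toReal|
      = D := by
    rw [gaussian_Iic_toReal, gaussian_Iic_toReal, hc1, hc2,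
      abs_of_nonneg (sub_nonneg.2 (Phi_mono hnegle)), hDval]
  have hSval : (∫ x in Iic c, gaussianPDFReal μ₁ 1 x)
      - ∫ x in Iic c, gaussianPDFReal μ₂ 1 x = D := by
    rw [← gaussian_toReal, ← gaussian_toReal, gaussian_Iic_toReal, gaussian_Iic_toReal,
      hc1, hc2, hDval]
  have key : ∀ A : Set ℝ, MeasurableSet A →
      |((gaussianReal μ₁ 1) A).toReal - ((gaussianReal μ₂ 1) A).toReal| ≤ D := by
    intro A hA
    rw [gaussian_toReal, gaussian_toReal, ← hSval]
    refine abs_diff_le_key (integrable_gaussianPDFReal _ _) (integrable_gaussianPDFReal _ _)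
      ?_ measurableSet_Iic hA ?_ ?_
    · rw [integral_gaussianPDFReal_eq_one _ one_ne_zero,
        integral_gaussianPDFReal_eq_one _ one_ne_zero]
    · intro x hx
      exact pdf_le (by simp only [mem_Iic, hc] at hx; nlinarith)
    · intro x hx
      exact pdf_le (by simp only [mem_compl_iff, mem_Iic, not_le, hc] at hx; nlinarith)
  unfold tvDist
  apply le_antisymm
  · exact ciSup_le fun A => key A.1 A.2
  · have hb : BddAbove (range fun A : {A : Set ℝ // MeasurableSet A} =>
        |((gaussianReal μ₁ 1) A.1).toReal - ((gaussianReal μ₂ 1) A.1).toReal|) :=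
      ⟨D, by rintro y ⟨A, rfl⟩; exact key A.1 A.2⟩
    calc D = |((gaussianReal μ₁ 1) (Iic c)).toReal - ((gaussianReal μ₂ 1) (Iic c)).toReal| :=
        hIic.symm
      _ ≤ _ := le_ciSup hb ⟨Iic c, measurableSet_Iic⟩

/-- For unit-variance Gaussians, the total variation distance equals
`1 - 2Φ(-|μ₁ - μ₂|/2)`, and there is a sub-probability coupling over the
shifted diagonal with that parameter. -/
theorem gaussian_tv_and_shifted_diag_coupling (μ₁ μ₂ : ℝ) :
    tvDist (gaussianReal μ₁ 1) (gaussianReal μ₂ 1) = 1 - 2 * Phi (-|μ₁ - μ₂| / 2) ∧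
    ∃ v : Measure (ℝ × ℝ),
      IsSubCoupling v (gaussianReal μ₁ 1) (gaussianReal μ₂ 1)
        {z : ℝ × ℝ | z.2 = z.1 + (μ₂ - μ₁)} (1 - 2 * Phi (-|μ₁ - μ₂| / 2)) := by
  constructor
  · rcases le_total μ₁ μ₂ with h | h
    · rw [tv_formula μ₁ μ₂ h, abs_of_nonpos (by linarith : μ₁ - μ₂ ≤ 0)]
      ring_nf
    · rw [tvDist_comm, tv_formula μ₂ μ₁ h, abs_of_nonneg (by linarith : (0:ℝ) ≤ μ₁ - μ₂)]
  · set m : ℝ := μ₂ - μ₁ with hm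
    set T : ℝ → ℝ × ℝ := fun x => (x, x + m) with hT
    have hTm : Measurable T := measurable_id.prodMk (measurable_add_const m)
    refine ⟨Measure.map T (gaussianReal μ₁ 1), ?_, ?_, ?_, ?_⟩
    · have hR : MeasurableSet {z : ℝ × ℝ | z.2 = z.1 + m} :=
        measurableSet_eq_fun measurable_snd (measurable_fst.add_const m)
      rw [Measure.map_apply hTm MeasurableSet.univ, Measure.map_apply hTm hR]
      congr 1
      ext x
      simp [hT]
    · rw [Measure.map_apply hTm MeasurableSet.univ, preimage_univ, measure_univ]
      rw [ENNReal.ofReal_le_one]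
      have h0 : Phi (-|μ₁ - μ₂| / 2) ≤ Phi 0 := Phi_mono (by have := abs_nonneg (μ₁ - μ₂); linarith)
      have h05 : Phi 0 = 1 / 2 := by have := Phi_add_Phi_neg 0; rw [neg_zero] at this; linarith
      linarith
    · intro A hA
      rw [Measure.map_apply hTm (MeasurableSet.univ.prod hA)]
      have hpre : T ⁻¹' (univ ×ˢ A) = (fun x => x + m) ⁻¹' A := by
        ext x; simp [hT]
      rw [hpre, ← Measure.map_apply (measurable_add_const m) hA,
        gaussianReal_map_add_const m]
      have : μ₁ + m = μ₂ := by rw [hm]; ring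
      rw [this]
    · intro B hB
      rw [Measure.map_apply hTm (hB.prod MeasurableSet.univ)]
      have hpre : T ⁻¹' (B ×ˢ univ) = B := by ext x; simp [hT]
      rw [hpre]
end

section
/- Product of sub-probability couplings: if v₁ is a sub-probability coupling of p̂₁ and p₁ over R₁ with parameter δ₁, and v₂ is a sub-probability coupling of p̂₂ and p₂ over R₂ with parameter δ₂, then the product measure v₁ ⊗ v₂ (rearranged onto (X̂₁ × X̂₂) × (X₁ × X₂)) is a sub-probability coupling of p̂₁ ⊗ p̂₂ and p₁ ⊗ p₂ over the relation R = {((x̂₁, x̂₂), (x₁, x₂)) : (x̂₁, x₁) ∈ R₁ ∧ (x̂₂, x₂) ∈ R₂} with parameter δ = 1 − (1 − δ₁)(1 − δ₂). -/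
open MeasureTheory Set

lemma my_prod_mono {α β : Type*} [MeasurableSpace α] [MeasurableSpace β]
    {μ μ' : Measure α} {ν ν' : Measure β} [SFinite ν] [SFinite ν']
    (hμ : μ ≤ μ') (hν : ν ≤ ν') : μ.prod ν ≤ μ'.prod ν' := by
  refine Measure.le_iff.mpr fun s hs => ?_
  rw [Measure.prod_apply hs, Measure.prod_apply hs]
  exact lintegral_mono' hμ fun x => hν _

/-- The product of two sub-probability couplings (rearranged onto
`(X̂₁ × X̂₂) × (X₁ × X₂)`) is a sub-probability coupling of the product
measures over the product relation with parameter `1 - (1 - δ₁)(1 - δ₂)`. -/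
theorem subCoupling_prod
    {X1h X1 X2h X2 : Type*}
    [MeasurableSpace X1h] [StandardBorelSpace X1h]
    [MeasurableSpace X1] [StandardBorelSpace X1]
    [MeasurableSpace X2h] [StandardBorelSpace X2h]
    [MeasurableSpace X2] [StandardBorelSpace X2]
    (v1 : Measure (X1h × X1)) (p1h : Measure X1h) (p1 : Measure X1)
    (v2 : Measure (X2h × X2)) (p2h : Measure X2h) (p2 : Measure X2)
    [IsProbabilityMeasure p1h] [IsProbabilityMeasure p1]
    [IsProbabilityMeasure p2h] [IsProbabilityMeasure p2]
    [IsFiniteMeasure v1] [IsFiniteMeasure v2]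
    (R1 : Set (X1h × X1)) (hR1 : MeasurableSet R1)
    (R2 : Set (X2h × X2)) (hR2 : MeasurableSet R2)
    (δ1 δ2 : ℝ) (hδ1 : δ1 ∈ Icc (0:ℝ) 1) (hδ2 : δ2 ∈ Icc (0:ℝ) 1)
    (h1 : IsSubCoupling v1 p1h p1 R1 δ1)
    (h2 : IsSubCoupling v2 p2h p2 R2 δ2) :
    IsSubCoupling
      (Measure.map (fun q : (X1h × X1) × (X2h × X2) =>
        ((q.1.1, q.2.1), (q.1.2, q.2.2))) (v1.prod v2))
      (p1h.prod p2h) (p1.prod p2)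
      {z : (X1h × X2h) × (X1 × X2) | (z.1.1, z.2.1) ∈ R1 ∧ (z.1.2, z.2.2) ∈ R2}
      (1 - (1 - δ1) * (1 - δ2)) := by
  set f := fun q : (X1h × X1) × (X2h × X2) => ((q.1.1, q.2.1), (q.1.2, q.2.2)) with hf
  have hfm : Measurable f :=
    ((measurable_fst.fst.prodMk measurable_snd.fst).prodMk
      (measurable_fst.snd.prodMk measurable_snd.snd))
  have hRm : MeasurableSet
      {z : (X1h × X2h) × (X1 × X2) | (z.1.1, z.2.1) ∈ R1 ∧ (z.1.2, z.2.2) ∈ R2} := by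
    refine MeasurableSet.inter ?_ ?_
    · exact (measurable_fst.fst.prodMk measurable_snd.fst) hR1
    · exact (measurable_fst.snd.prodMk measurable_snd.snd) hR2
  have hle1 : v1.map Prod.snd ≤ p1 := by
    refine Measure.le_iff.mpr fun A hA => ?_
    rw [Measure.map_apply measurable_snd hA]
    have : Prod.snd ⁻¹' A = (univ : Set X1h) ×ˢ A := by ext x; simp
    rw [this]; exact h1.2.2.1 A hA
  have hle2 : v2.map Prod.snd ≤ p2 := by
    refine Measure.le_iff.mpr fun A hA => ?_
    rw [Measure.map_apply measurable_snd hA]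
    have : Prod.snd ⁻¹' A = (univ : Set X2h) ×ˢ A := by ext x; simp
    rw [this]; exact h2.2.2.1 A hA
  have hle1h : v1.map Prod.fst ≤ p1h := by
    refine Measure.le_iff.mpr fun B hB => ?_
    rw [Measure.map_apply measurable_fst hB]
    have : Prod.fst ⁻¹' B = B ×ˢ (univ : Set X1) := by ext x; simp
    rw [this]; exact h1.2.2.2 B hB
  have hle2h : v2.map Prod.fst ≤ p2h := by
    refine Measure.le_iff.mpr fun B hB => ?_
    rw [Measure.map_apply measurable_fst hB]
    have : Prod.fst ⁻¹' B = B ×ˢ (univ : Set X2) := by ext x; simp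
    rw [this]; exact h2.2.2.2 B hB
  refine ⟨?_, ?_, ?_, ?_⟩
  · rw [Measure.map_apply hfm MeasurableSet.univ, Measure.map_apply hfm hRm]
    have hpre : f ⁻¹' {z : (X1h × X2h) × (X1 × X2) |
        (z.1.1, z.2.1) ∈ R1 ∧ (z.1.2, z.2.2) ∈ R2} = R1 ×ˢ R2 := by
      ext q; simp [f, Set.mem_prod]
    rw [Set.preimage_univ, hpre, ← Set.univ_prod_univ, Measure.prod_prod,
      Measure.prod_prod, ← h1.1, ← h2.1]
  · rw [Measure.map_apply hfm MeasurableSet.univ, Set.preimage_univ,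
      ← Set.univ_prod_univ, Measure.prod_prod]
    have : (1 : ℝ) - (1 - (1 - δ1) * (1 - δ2)) = (1 - δ1) * (1 - δ2) := by ring
    rw [this, ENNReal.ofReal_mul (by linarith [hδ1.2])]
    exact mul_le_mul' h1.2.1 h2.2.1
  · intro A hA
    rw [Measure.map_apply hfm (MeasurableSet.univ.prod hA)]
    have hpre : f ⁻¹' ((univ : Set (X1h × X2h)) ×ˢ A)
        = Prod.map (Prod.snd : X1h × X1 → X1) (Prod.snd : X2h × X2 → X2) ⁻¹' A := by
      ext q; simp [f, Prod.map]
    rw [hpre, ← Measure.map_apply (measurable_snd.prodMap measurable_snd) hA,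
      ← Measure.map_prod_map _ _ measurable_snd measurable_snd]
    exact Measure.le_iff.mp (my_prod_mono hle1 hle2) A hA
  · intro B hB
    rw [Measure.map_apply hfm (hB.prod MeasurableSet.univ)]
    have hpre : f ⁻¹' (B ×ˢ (univ : Set (X1 × X2)))
        = Prod.map (Prod.fst : X1h × X1 → X1h) (Prod.fst : X2h × X2 → X2h) ⁻¹' B := by
      ext q; simp [f, Prod.map]
    rw [hpre, ← Measure.map_apply (measurable_fst.prodMap measurable_fst) hB,
      ← Measure.map_prod_map _ _ measurable_fst measurable_fst]
    exact Measure.le_iff.mp (my_prod_mono hle1h hle2h) B hB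
end
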